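/- The Deep Infomax mutual-information estimator is a lower bound of the JS-version mutual information between the label and the latent code: for every bounded measurable T : Y×Z → ℝ, Î(z,y) := E_{(y,z)∼π}[ −softplus(−T(y,z)) ] − E_{(y,z)∼π_Y⊗π_Z}[ softplus(T(y,z)) ] ≤ KL(π ‖ M) + KL(π_Y⊗π_Z ‖ M) − log 4, where M = ½(π + π_Y⊗π_Z). In particular, if Y and Z are independent under π (i.e. π = π_Y⊗π_Z), then Î(z,y) ≤ 0 for every such T. -/

import Mathlib

open MeasureTheory

/-- Kullback–Leibler divergence between two measures, as the expected
log-likelihood ratio (here each measure is absolutely continuous w.r.t. the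
mixture `M`, and the log-likelihood ratio w.r.t. the mixture is integrable). -/
noncomputable def klDiv {α : Type*} [MeasurableSpace α] (ν ρ : Measure α) : ℝ :=
  ∫ x, llr ν ρ x ∂ν

/-- The softplus function `softplus t = log(1 + exp t)`. -/
noncomputable def softplus (t : ℝ) : ℝ := Real.log (1 + Real.exp t)

/-! Let `p, q` be the densities of `μ, ν` with respect to the mixture `M = ½(μ + ν)`, so that
`p + q = 2`, and let `s = σ(T)`. Since `-softplus (-T) = log s` and `-softplus T = log (1 - s)`,
the estimator is `∫ (p log s + q log (1 - s)) dM`. Gibbs' inequality for the two-point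
distributions `(p/2, q/2)` and `(s, 1 - s)` bounds the integrand by `p log p + q log q - log 4`,
whose integral is `KL(μ‖M) + KL(ν‖M) - log 4`. If `μ = ν`, then `M = μ` and both divergences
vanish. -/

section

open Real Set
open scoped ENNReal

lemma continuous_softplus : Continuous softplus :=
  (continuous_const.add continuous_exp).log fun t => (add_pos one_pos (exp_pos t)).ne'

lemma neg_softplus_neg_eq_log_sigmoid (t : ℝ) : -softplus (-t) = log (sigmoid t) := by
  rw [softplus, sigmoid_def, log_inv]

lemma neg_softplus_eq_log_one_sub_sigmoid (t : ℝ) : -softplus t = log (1 - sigmoid t) := by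
  rw [← sigmoid_neg, ← neg_softplus_neg_eq_log_sigmoid, neg_neg]

lemma mul_log_le_mul_log_add_sub {x y : ℝ} (hx : 0 ≤ x) (hy : 0 < y) :
    x * log y ≤ x * log x + y - x := by
  rcases hx.eq_or_lt with rfl | hx
  · simpa using hy.le
  · have h := mul_le_mul_of_nonneg_left (log_le_sub_one_of_pos (div_pos hy hx)) hx.le
    rw [log_div hy.ne' hx.ne', mul_sub, mul_sub, mul_div_cancel₀ y hx.ne'] at h
    linarith

lemma mul_neg_softplus_neg_add_mul_neg_softplus_le (t : ℝ) {p q : ℝ} (hp : 0 ≤ p) (hq : 0 ≤ q)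
    (hpq : p + q = 2) :
    p * -softplus (-t) + q * -softplus t ≤ p * log p + q * log q - log 4 := by
  have hs := mul_log_le_mul_log_add_sub hp (mul_pos two_pos (sigmoid_pos t))
  have hs' := mul_log_le_mul_log_add_sub hq (mul_pos two_pos (sub_pos.2 (sigmoid_lt_one t)))
  have hlog4 : log 4 = 2 * log 2 := by
    rw [show (4 : ℝ) = 2 ^ 2 by norm_num, log_pow, Nat.cast_ofNat]
  rw [log_mul two_ne_zero (sigmoid_pos t).ne'] at hs
  rw [log_mul two_ne_zero (sub_pos.2 (sigmoid_lt_one t)).ne'] at hs'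
  rw [neg_softplus_neg_eq_log_sigmoid, neg_softplus_eq_log_one_sub_sigmoid, hlog4]
  linear_combination hs + hs' - (1 + log 2) * hpq

lemma integrable_comp_of_ae_mem_Icc {α : Type*} [MeasurableSpace α] {μ : Measure α}
    [IsFiniteMeasure μ] {φ : ℝ → ℝ} (hφ : Continuous φ) {g : α → ℝ}
    (hg : AEStronglyMeasurable g μ) {a b : ℝ} (hab : ∀ᵐ x ∂μ, g x ∈ Icc a b) :
    Integrable (fun x => φ (g x)) μ := by
  obtain ⟨C, hC⟩ := isCompact_Icc.exists_bound_of_continuousOn hφ.continuousOn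
  exact .of_bound (hφ.comp_aestronglyMeasurable hg) C (hab.mono fun x hx => hC _ hx)

section Mixture

variable {α : Type*} [MeasurableSpace α] (μ ν : Measure α)

lemma half_smul_add_self : (2 : ℝ≥0∞)⁻¹ • (μ + μ) = μ := by
  rw [← two_smul ℝ≥0∞ μ, smul_smul, ENNReal.inv_mul_cancel two_ne_zero ENNReal.ofNat_ne_top,
    one_smul]

lemma klDiv_self [SigmaFinite μ] : klDiv μ μ = 0 := by
  rw [klDiv, integral_congr_ae (llr_self μ)]
  simp

instance isProbabilityMeasure_half_smul_add [IsProbabilityMeasure μ] [IsProbabilityMeasure ν] :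
    IsProbabilityMeasure ((2 : ℝ≥0∞)⁻¹ • (μ + ν)) := by
  constructor
  rw [Measure.smul_apply, Measure.add_apply, measure_univ, measure_univ, one_add_one_eq_two,
    smul_eq_mul, ENNReal.inv_mul_cancel two_ne_zero ENNReal.ofNat_ne_top]

lemma absolutelyContinuous_half_smul_add_left : μ ≪ (2 : ℝ≥0∞)⁻¹ • (μ + ν) :=
  (Measure.AbsolutelyContinuous.rfl.add_right ν).smul_right (by simp)

lemma absolutelyContinuous_half_smul_add_right : ν ≪ (2 : ℝ≥0∞)⁻¹ • (μ + ν) := by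
  rw [add_comm]; exact absolutelyContinuous_half_smul_add_left ν μ

lemma toReal_rnDeriv_half_smul_add [IsFiniteMeasure μ] [IsFiniteMeasure ν] :
    ∀ᵐ x ∂((2 : ℝ≥0∞)⁻¹ • (μ + ν)),
      (μ.rnDeriv ((2 : ℝ≥0∞)⁻¹ • (μ + ν)) x).toReal
        + (ν.rnDeriv ((2 : ℝ≥0∞)⁻¹ • (μ + ν)) x).toReal = 2 := by
  set M := (2 : ℝ≥0∞)⁻¹ • (μ + ν)
  have : IsFiniteMeasure M := (μ + ν).smul_finite (by simp)
  have hM : μ + ν = (2 : ℝ≥0∞) • M := by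
    rw [smul_smul, ENNReal.mul_inv_cancel two_ne_zero ENNReal.ofNat_ne_top, one_smul]
  have h2M : (μ + ν).rnDeriv M =ᵐ[M] (2 : ℝ≥0∞) • M.rnDeriv M := by
    rw [hM]; exact Measure.rnDeriv_smul_left_of_ne_top M M ENNReal.ofNat_ne_top
  filter_upwards [Measure.rnDeriv_add μ ν M, h2M, Measure.rnDeriv_self M,
    Measure.rnDeriv_lt_top μ M, Measure.rnDeriv_lt_top ν M] with x hadd h2 hself hμ hν
  rw [← ENNReal.toReal_add hμ.ne hν.ne, ← Pi.add_apply, ← hadd, h2, Pi.smul_apply, hself,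
    smul_eq_mul, mul_one, ENNReal.toReal_ofNat]

lemma integrable_toReal_rnDeriv_half_smul_add_mul_log [IsFiniteMeasure μ] [IsFiniteMeasure ν] :
    Integrable (fun x => (μ.rnDeriv ((2 : ℝ≥0∞)⁻¹ • (μ + ν)) x).toReal
      * log (μ.rnDeriv ((2 : ℝ≥0∞)⁻¹ • (μ + ν)) x).toReal) ((2 : ℝ≥0∞)⁻¹ • (μ + ν)) := by
  have : IsFiniteMeasure ((2 : ℝ≥0∞)⁻¹ • (μ + ν)) := (μ + ν).smul_finite (by simp)
  refine integrable_comp_of_ae_mem_Icc continuous_mul_log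
    (μ.measurable_rnDeriv _).ennreal_toReal.aestronglyMeasurable (a := 0) (b := 2) ?_
  filter_upwards [toReal_rnDeriv_half_smul_add μ ν] with x hx
  exact ⟨ENNReal.toReal_nonneg,
    by linarith [(ν.rnDeriv ((2 : ℝ≥0∞)⁻¹ • (μ + ν)) x).toReal_nonneg]⟩

theorem integral_neg_softplus_neg_sub_integral_softplus_le
    [IsProbabilityMeasure μ] [IsProbabilityMeasure ν]
    {f : α → ℝ} (hf : Measurable f) (hf_bdd : ∃ C, ∀ x, |f x| ≤ C) :
    ∫ x, -softplus (-f x) ∂μ - ∫ x, softplus (f x) ∂ν ≤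
      klDiv μ ((2 : ℝ≥0∞)⁻¹ • (μ + ν)) + klDiv ν ((2 : ℝ≥0∞)⁻¹ • (μ + ν)) - log 4 := by
  obtain ⟨C, hC⟩ := hf_bdd
  set M := (2 : ℝ≥0∞)⁻¹ • (μ + ν)
  set p := fun x => (μ.rnDeriv M x).toReal
  set q := fun x => (ν.rnDeriv M x).toReal
  have hμM : μ ≪ M := absolutelyContinuous_half_smul_add_left μ ν
  have hνM : ν ≪ M := absolutelyContinuous_half_smul_add_right μ ν
  have hpq : ∀ᵐ x ∂M, p x + q x = 2 := toReal_rnDeriv_half_smul_add μ ν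
  have hf_mem : ∀ x, f x ∈ Icc (-C) C := fun x => abs_le.1 (hC x)
  have hμ_int : Integrable (fun x => -softplus (-f x)) μ :=
    integrable_comp_of_ae_mem_Icc (continuous_softplus.comp continuous_neg).neg
      hf.aestronglyMeasurable (ae_of_all _ hf_mem)
  have hν_int : Integrable (fun x => -softplus (f x)) ν :=
    integrable_comp_of_ae_mem_Icc continuous_softplus.neg hf.aestronglyMeasurable
      (ae_of_all _ hf_mem)
  have hp_int : Integrable (fun x => p x * log (p x)) M :=
    integrable_toReal_rnDeriv_half_smul_add_mul_log μ ν
  have hq_int : Integrable (fun x => q x * log (q x)) M := by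
    have h := integrable_toReal_rnDeriv_half_smul_add_mul_log ν μ
    rwa [add_comm ν μ] at h
  have hμ_int' := (integrable_rnDeriv_smul_iff hμM).2 hμ_int
  have hν_int' := (integrable_rnDeriv_smul_iff hνM).2 hν_int
  calc ∫ x, -softplus (-f x) ∂μ - ∫ x, softplus (f x) ∂ν
      = ∫ x, (p x * -softplus (-f x) + q x * -softplus (f x)) ∂M := by
        rw [sub_eq_add_neg, ← integral_neg, ← integral_rnDeriv_smul hμM,
          ← integral_rnDeriv_smul hνM, ← integral_add hμ_int' hν_int']
        rfl
    _ ≤ ∫ x, (p x * log (p x) + q x * log (q x) - log 4) ∂M :=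
        integral_mono_ae (hμ_int'.add hν_int') ((hp_int.add hq_int).sub (integrable_const _))
          (hpq.mono fun x hx => mul_neg_softplus_neg_add_mul_neg_softplus_le _
            ENNReal.toReal_nonneg ENNReal.toReal_nonneg hx)
    _ = klDiv μ M + klDiv ν M - log 4 := by
        rw [integral_sub ?_ (integrable_const _), integral_add hp_int hq_int,
          integral_rnDeriv_mul_log hμM, integral_rnDeriv_mul_log hνM]
        · simp [klDiv]
        · exact hp_int.add hq_int

end Mixture

end

/-- **The Deep Infomax mutual-information estimator is a lower bound of the
JS-version mutual information between label and latent code**: for every bounded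
measurable `T : Y×Z → ℝ`,
`Î(z,y) = E_π[-softplus(-T)] - E_{π_Y⊗π_Z}[softplus T]
  ≤ KL(π‖M) + KL(π_Y⊗π_Z‖M) - log 4`, with `M = ½(π + π_Y⊗π_Z)`.
In particular, if `Y` and `Z` are independent under `π` (i.e. `π = π_Y⊗π_Z`),
then `Î(z,y) ≤ 0` for every such `T`. -/
theorem deep_infomax_mi_lower_bound
    {Y Z : Type*} [MeasurableSpace Y] [MeasurableSpace Z]
    (π : Measure (Y × Z)) [IsProbabilityMeasure π]
    (T : Y × Z → ℝ) (hT_meas : Measurable T) (hT_bdd : ∃ C : ℝ, ∀ p, |T p| ≤ C) :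
    (∫ p, -softplus (-T p) ∂π -
        ∫ p, softplus (T p) ∂((π.map Prod.fst).prod (π.map Prod.snd)) ≤
      klDiv π
          ((2 : ENNReal)⁻¹ • (π + (π.map Prod.fst).prod (π.map Prod.snd))) +
        klDiv ((π.map Prod.fst).prod (π.map Prod.snd))
          ((2 : ENNReal)⁻¹ • (π + (π.map Prod.fst).prod (π.map Prod.snd))) -
        Real.log 4)
    ∧ (π = (π.map Prod.fst).prod (π.map Prod.snd) →
        ∫ p, -softplus (-T p) ∂π -
            ∫ p, softplus (T p) ∂((π.map Prod.fst).prod (π.map Prod.snd)) ≤ 0) := by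
  have : IsProbabilityMeasure (π.map Prod.fst) := inferInstanceAs (IsProbabilityMeasure π.fst)
  have : IsProbabilityMeasure (π.map Prod.snd) := inferInstanceAs (IsProbabilityMeasure π.snd)
  have h := integral_neg_softplus_neg_sub_integral_softplus_le π
    ((π.map Prod.fst).prod (π.map Prod.snd)) hT_meas hT_bdd
  refine ⟨h, fun hπ => h.trans ?_⟩
  rw [← hπ, half_smul_add_self, klDiv_self]
  linarith [Real.log_nonneg (by norm_num : (1 : ℝ) ≤ 4)]
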